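/- Orthonormality of the odd generalized q-Hermite polynomials induced by little q-Laguerre orthonormality with shifted parameter. Let 0 < q < 1, α > −1, κ ≥ 0. Define the shifted little q-Laguerre weight ṽ(x) = x^{α+1}·∏_{l=0}^∞ (1 − q^{2(l+1)}κ²·x) for x > 0, and the generalized q-Hermite weight ω(x) = |x|^{2α+1}·∏_{l=0}^∞ (1 − q^{2(l+1)}κ²·x²) for x ∈ ℝ. Let (p̃_n)_{n≥0} be real functions on (0,1] such that for all m, n the series Σ_{k=0}^∞ p̃_m(q^{2k})·p̃_n(q^{2k})·ṽ(q^{2k})·q^{2k} converges absolutely and (1 − q²)·Σ_{k=0}^∞ p̃_m(q^{2k})·p̃_n(q^{2k})·ṽ(q^{2k})·q^{2k} = δ_{mn}. Define P_{2n+1}(x) = √((1+q)/2)·x·p̃_n(x²). Then for all m, n: (1 − q)·Σ_{k=0}^∞ [P_{2m+1}(q^k)·P_{2n+1}(q^k)·ω(q^k) + P_{2m+1}(−q^k)·P_{2n+1}(−q^k)·ω(−q^k)]·q^k = δ_{mn}, i.e. the Jackson q-integral over [−1,1] of P_{2m+1}·P_{2n+1}·ω equals δ_{mn}. -/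

import Mathlib

/-!
Both weights are the same infinite product evaluated at `y = x²`, and the power factors satisfy
`x · |x|^(2α+1) = (x²)^(α+1)` for `x > 0`; hence `x · ω(x) = ṽ(x²)`. The integrand
`P_{2m+1} P_{2n+1} ω` is even, so its Jackson integral over `[-1,1]` is twice the one over `[0,1]`,
where it equals `(1+q)/2 · x · F(x²)` with `F = p̃_m p̃_n ṽ`. The substitution `y = x²` turns the
Jackson integral of `x · F(x²)` in base `q` into `1/(1+q)` times that of `F` in base `q²`, which is
`δ_{mn}` by hypothesis.
-/

open Real

noncomputable def jacksonIntegral (q : ℝ) (f : ℝ → ℝ) : ℝ :=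
  (1 - q) * ∑' k : ℕ, f (q ^ k) * q ^ k

noncomputable def symmJacksonIntegral (q : ℝ) (f : ℝ → ℝ) : ℝ :=
  (1 - q) * ∑' k : ℕ, (f (q ^ k) + f (-(q ^ k))) * q ^ k

lemma jacksonIntegral_congr_pos {q : ℝ} (hq : 0 < q) {f g : ℝ → ℝ}
    (h : ∀ x, 0 < x → f x = g x) : jacksonIntegral q f = jacksonIntegral q g := by
  unfold jacksonIntegral
  congr 1
  exact tsum_congr fun k => by rw [h _ (pow_pos hq k)]

lemma jacksonIntegral_const_mul (q c : ℝ) (f : ℝ → ℝ) :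
    jacksonIntegral q (fun x => c * f x) = c * jacksonIntegral q f := by
  unfold jacksonIntegral
  simp_rw [mul_assoc c, tsum_mul_left]
  ring

lemma symmJacksonIntegral_of_even (q : ℝ) {f : ℝ → ℝ} (hf : ∀ x, f (-x) = f x) :
    symmJacksonIntegral q f = 2 * jacksonIntegral q f := by
  unfold symmJacksonIntegral jacksonIntegral
  simp_rw [hf, ← two_mul, mul_assoc, tsum_mul_left]
  ring

lemma one_add_mul_jacksonIntegral_mul_comp_sq (q : ℝ) (F : ℝ → ℝ) :
    (1 + q) * jacksonIntegral q (fun x => x * F (x ^ 2)) = jacksonIntegral (q ^ 2) F := by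
  unfold jacksonIntegral
  simp_rw [← pow_mul, mul_comm 2, pow_mul]
  have hterm : ∀ k : ℕ, (q ^ k) * F ((q ^ k) ^ 2) * q ^ k = F ((q ^ k) ^ 2) * (q ^ k) ^ 2 :=
    fun k => by ring
  rw [tsum_congr hterm]
  ring

lemma sq_rpow_add_one {x : ℝ} (hx : 0 < x) (α : ℝ) :
    (x ^ 2) ^ (α + 1) = x * x ^ (2 * α + 1) := by
  rw [← rpow_natCast_mul hx.le, Nat.cast_ofNat, show 2 * (α + 1) = 2 * α + 1 + 1 by ring,
    rpow_add_one hx.ne', mul_comm]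

theorem odd_qHermite_orthonormal_general (q α κ : ℝ) (hq0 : 0 < q)
    (vt ω : ℝ → ℝ)
    (hvt : ∀ x : ℝ, 0 < x →
      vt x = x ^ (α + 1) * ∏' l : ℕ, (1 - q ^ (2 * (l + 1)) * κ ^ 2 * x))
    (hω : ∀ x : ℝ,
      ω x = |x| ^ (2 * α + 1) * ∏' l : ℕ, (1 - q ^ (2 * (l + 1)) * κ ^ 2 * x ^ 2))
    (pt : ℕ → ℝ → ℝ)
    (horth : ∀ m n : ℕ,
      (1 - q ^ 2) * ∑' k : ℕ,
          pt m (q ^ (2 * k)) * pt n (q ^ (2 * k)) * vt (q ^ (2 * k)) * q ^ (2 * k)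
        = if m = n then 1 else 0)
    (P : ℕ → ℝ → ℝ)
    (hP : ∀ (n : ℕ) (x : ℝ),
      P (2 * n + 1) x = Real.sqrt ((1 + q) / 2) * x * pt n (x ^ 2)) :
    ∀ m n : ℕ,
      (1 - q) * ∑' k : ℕ,
          (P (2 * m + 1) (q ^ k) * P (2 * n + 1) (q ^ k) * ω (q ^ k)
            + P (2 * m + 1) (-(q ^ k)) * P (2 * n + 1) (-(q ^ k)) * ω (-(q ^ k)))
          * q ^ k
        = if m = n then 1 else 0 := by
  intro m n
  have hω_neg (x : ℝ) : ω (-x) = ω x := by rw [hω, hω, abs_neg, neg_sq]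
  have hω_vt (x : ℝ) (hx : 0 < x) : x * ω x = vt (x ^ 2) := by
    rw [hω, hvt _ (by positivity), abs_of_pos hx, sq_rpow_add_one hx]
    ring
  have hsqrt : √((1 + q) / 2) ^ 2 = (1 + q) / 2 := sq_sqrt (by positivity)
  have horth' : jacksonIntegral (q ^ 2) (fun y => pt m y * pt n y * vt y) =
      if m = n then 1 else 0 := by
    simpa only [jacksonIntegral, ← pow_mul] using horth m n
  have heven (x : ℝ) : P (2 * m + 1) (-x) * P (2 * n + 1) (-x) * ω (-x) =
      P (2 * m + 1) x * P (2 * n + 1) x * ω x := by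
    simp only [hP, hω_neg, neg_sq]
    ring
  have hpos (x : ℝ) (hx : 0 < x) : P (2 * m + 1) x * P (2 * n + 1) x * ω x =
      (1 + q) / 2 * (x * (pt m (x ^ 2) * pt n (x ^ 2) * vt (x ^ 2))) := by
    rw [hP, hP, ← hω_vt x hx]
    linear_combination (x ^ 2 * pt m (x ^ 2) * pt n (x ^ 2) * ω x) * hsqrt
  change symmJacksonIntegral q (fun x => P (2 * m + 1) x * P (2 * n + 1) x * ω x) = _
  rw [symmJacksonIntegral_of_even q heven, jacksonIntegral_congr_pos hq0 hpos,
    jacksonIntegral_const_mul, ← horth', ← one_add_mul_jacksonIntegral_mul_comp_sq]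
  ring

/-- Orthonormality of the odd generalized q-Hermite polynomials
`P (2n+1) x = √((1+q)/2) · x · p̃ₙ(x²)` with respect to the Jackson q-integral
of the generalized q-Hermite weight `ω` on [−1,1], induced by the
orthonormality of the little q-Laguerre polynomials `p̃ₙ` (shifted parameter
α+1) with respect to the Jackson q²-integral of the shifted little q-Laguerre
weight `ṽ` on [0,1]. -/
theorem odd_qHermite_orthonormal (q α κ : ℝ) (hq0 : 0 < q) (hq1 : q < 1)
    (hα : -1 < α) (hκ : 0 ≤ κ)
    (vt ω : ℝ → ℝ)
    (hvt : ∀ x : ℝ, 0 < x →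
      vt x = x ^ (α + 1) * ∏' l : ℕ, (1 - q ^ (2 * (l + 1)) * κ ^ 2 * x))
    (hω : ∀ x : ℝ,
      ω x = |x| ^ (2 * α + 1) * ∏' l : ℕ, (1 - q ^ (2 * (l + 1)) * κ ^ 2 * x ^ 2))
    (pt : ℕ → ℝ → ℝ)
    (hsum : ∀ m n : ℕ, Summable (fun k : ℕ =>
      |pt m (q ^ (2 * k)) * pt n (q ^ (2 * k)) * vt (q ^ (2 * k)) * q ^ (2 * k)|))
    (horth : ∀ m n : ℕ,
      (1 - q ^ 2) * ∑' k : ℕ,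
          pt m (q ^ (2 * k)) * pt n (q ^ (2 * k)) * vt (q ^ (2 * k)) * q ^ (2 * k)
        = if m = n then 1 else 0)
    (P : ℕ → ℝ → ℝ)
    (hP : ∀ (n : ℕ) (x : ℝ),
      P (2 * n + 1) x = Real.sqrt ((1 + q) / 2) * x * pt n (x ^ 2)) :
    ∀ m n : ℕ,
      (1 - q) * ∑' k : ℕ,
          (P (2 * m + 1) (q ^ k) * P (2 * n + 1) (q ^ k) * ω (q ^ k)
            + P (2 * m + 1) (-(q ^ k)) * P (2 * n + 1) (-(q ^ k)) * ω (-(q ^ k)))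
          * q ^ k
        = if m = n then 1 else 0 :=
  odd_qHermite_orthonormal_general q α κ hq0 vt ω hvt hω pt horth P hP
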